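/- Let H be a real Hilbert space, 𝒳 ⊆ H, and let 𝒴 ⊆ H be open and convex. Let q(y|x) := exp(−a(x) − b(y) + c·⟨x, y⟩) for (x, y) ∈ 𝒳 × 𝒴, where c > 0, a : 𝒳 → ℝ, and b : 𝒴 → ℝ is continuously differentiable with locally bounded derivative. Let P be a probability measure on 𝒳 such that for every y ∈ 𝒴 there exists r > 0 with ∫ (1 + ‖x‖)²·exp(−a(x) + c·r·‖x‖ + c·⟨x, y⟩) dP(x) < ∞, and assume the support of P is not contained in any affine hyperplane, i.e. P({x : ⟨x, u⟩ = d}) < 1 for every nonzero u ∈ H and every d ∈ ℝ. Then the proto conditional mean f_P(y) := (∫ x·q(y|x) dP(x)) / (∫ q(y|x) dP(x)) has Fréchet differential Df_P(y) positive definite for every y ∈ 𝒴, f_P is injective on 𝒴, and there exists a penalty φ_P : H → ℝ ∪ {+∞} such that for every y ∈ 𝒴, f_P(y) is the unique minimizer of x ↦ (1/2)‖y − x‖² + φ_P(x) over H. -/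

import Mathlib

open MeasureTheory RealInnerProductSpace

/-- The "proto" conditional mean in a real Hilbert space for the proto conditional density `q`
(with `q y x` playing the role of `q(y|x)`) and the prior `P`. -/
noncomputable def protoMean {H : Type*} [NormedAddCommGroup H] [InnerProductSpace ℝ H]
    [CompleteSpace H] [MeasurableSpace H] (q : H → H → ℝ) (P : Measure H) (y : H) : H :=
  (∫ x, q y x ∂P)⁻¹ • ∫ x, q y x • x ∂P

/-!
The factor `exp (-b y)` cancels in `f_P`, so `f_P = N / Z` with `Z y = ∫ exp (-a x + c⟪x, y⟫) dP`
and `N y = ∫ x • exp (-a x + c⟪x, y⟫) dP`. The moment condition allows differentiation under the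
integral sign near every `y ∈ 𝒴`: `f_P` is the gradient of the potential `ψ = c⁻¹ log Z`, and
`⟪u, Df_P(y) u⟫` is `c` times the variance of `⟪·, u⟫` under the tilted law
`exp (-a x + c⟪x, y⟫) dP / Z y`, which is positive since `P` does not live on a hyperplane.
So `ψ` is strictly convex on the convex set `𝒴`: `ψ y₁ + ⟪y₂ - y₁, f_P y₁⟫ < ψ y₂` for `y₁ ≠ y₂`.
This gives injectivity, and the penalty `φ (f_P y) = ⟪f_P y, y⟫ - ψ y - ‖f_P y‖² / 2`
(`⊤` off the range of `f_P`) makes `f_P y` the unique minimizer.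

The same two hypotheses make every Hilbert basis of `H` countable (the weighted second moments
along the basis vectors are positive and summable), so `H` is separable and `x ↦ x` is
strongly measurable, as the Bochner integrals above require.
-/

theorem lt_sub_of_hasDerivAt_of_strictMonoOn {g h : ℝ → ℝ}
    (hg : ∀ t ∈ Set.Icc (0 : ℝ) 1, HasDerivAt g (h t) t) (hh : StrictMonoOn h (Set.Icc 0 1)) :
    h 0 < g 1 - g 0 := by
  obtain ⟨ξ, hξ, hslope⟩ := exists_hasDerivAt_eq_slope g h zero_lt_one
    (fun t ht => (hg t ht).continuousAt.continuousWithinAt)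
    (fun t ht => hg t (Set.Ioo_subset_Icc_self ht))
  rw [sub_zero, div_one] at hslope
  exact hslope ▸ hh (Set.left_mem_Icc.mpr zero_le_one) (Set.Ioo_subset_Icc_self hξ) hξ.1

section StrictSubgradient

variable {H : Type*} [NormedAddCommGroup H] [InnerProductSpace ℝ H]

def IsStrictSubgradientOn (ψ : H → ℝ) (f : H → H) (Y : Set H) : Prop :=
  ∀ y₁ ∈ Y, ∀ y₂ ∈ Y, y₁ ≠ y₂ → ψ y₁ + ⟪y₂ - y₁, f y₁⟫ < ψ y₂

variable {ψ : H → ℝ} {f : H → H} {Y : Set H}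

theorem IsStrictSubgradientOn.injOn (h : IsStrictSubgradientOn ψ f Y) : Set.InjOn f Y := by
  intro y₁ h₁ y₂ h₂ hf
  by_contra hne
  have h₁₂ := h y₁ h₁ y₂ h₂ hne
  have h₂₁ := h y₂ h₂ y₁ h₁ (Ne.symm hne)
  have hsum : ⟪y₂ - y₁, f y₂⟫ + ⟪y₁ - y₂, f y₂⟫ = 0 := by
    rw [← inner_add_left]; simp
  rw [hf] at h₁₂
  linarith

theorem IsStrictSubgradientOn.exists_penalty (h : IsStrictSubgradientOn ψ f Y) :
    ∃ φ : H → EReal, ∀ y ∈ Y, ∀ x, x ≠ f y →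
      ((2⁻¹ * ‖y - f y‖ ^ 2 : ℝ) : EReal) + φ (f y) <
        ((2⁻¹ * ‖y - x‖ ^ 2 : ℝ) : EReal) + φ x := by
  classical
  set g := Function.invFunOn f Y
  have hg : ∀ z ∈ Y, g (f z) = z := fun z hz => h.injOn.leftInvOn_invFunOn hz
  -- on `f '' Y` this is `ψ* - ‖·‖² / 2`, with `ψ*` the convex conjugate of `ψ|_Y`
  refine ⟨fun x => if x ∈ f '' Y then ((⟪x, g x⟫ - ψ (g x) - 2⁻¹ * ‖x‖ ^ 2 : ℝ) : EReal)
    else ⊤, fun y hy x hx => ?_⟩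
  have hcost : ∀ z, 2⁻¹ * ‖y - f z‖ ^ 2 + (⟪f z, z⟫ - ψ z - 2⁻¹ * ‖f z‖ ^ 2) =
      2⁻¹ * ‖y‖ ^ 2 - (ψ z + ⟪y - z, f z⟫) := fun z => by
    rw [norm_sub_sq_real, inner_sub_left, real_inner_comm (f z) z]
    ring
  simp only [Set.mem_image_of_mem f hy, if_true, hg y hy]
  split_ifs with hxY
  · obtain ⟨z, hz, rfl⟩ := hxY
    have hzy : z ≠ y := fun hzy => hx (hzy ▸ rfl)
    rw [hg z hz, ← EReal.coe_add, ← EReal.coe_add, EReal.coe_lt_coe_iff, hcost y, hcost z,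
      sub_self, inner_zero_left, add_zero]
    linarith [h z hz y hy hzy]
  · rw [EReal.coe_add_top, ← EReal.coe_add]
    exact EReal.coe_lt_top _

theorem isStrictSubgradientOn_of_hasFDerivAt (hY : Convex ℝ Y)
    (hψ : ∀ y ∈ Y, HasFDerivAt ψ (innerSL ℝ (f y)) y)
    (hf : ∀ y ∈ Y, ∃ D : H →L[ℝ] H, HasFDerivAt f D y ∧ ∀ u, u ≠ 0 → 0 < ⟪u, D u⟫) :
    IsStrictSubgradientOn ψ f Y := by
  intro y₁ h₁ y₂ h₂ hne
  set u := y₂ - y₁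
  have hu : u ≠ 0 := sub_ne_zero.mpr hne.symm
  set γ : ℝ → H := fun t => y₁ + t • u
  have hγY : ∀ t ∈ Set.Icc (0 : ℝ) 1, γ t ∈ Y := fun t ht => hY.add_smul_sub_mem h₁ h₂ ht
  have hγ : ∀ t, HasDerivAt γ u t := fun t => by
    simpa [γ] using ((hasDerivAt_id t).smul_const u).const_add y₁
  have hψγ : ∀ t ∈ Set.Icc (0 : ℝ) 1, HasDerivAt (ψ ∘ γ) ⟪u, f (γ t)⟫ t := fun t ht => by
    simpa [real_inner_comm] using (hψ _ (hγY t ht)).comp_hasDerivAt t (hγ t)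
  have hderiv : ∀ t ∈ Set.Icc (0 : ℝ) 1,
      ∃ d, 0 < d ∧ HasDerivAt (fun t => ⟪u, f (γ t)⟫) d t := by
    intro t ht
    obtain ⟨D, hD, hpos⟩ := hf _ (hγY t ht)
    exact ⟨⟪u, D u⟫, hpos u hu,
      (innerSL ℝ u).hasFDerivAt.comp_hasDerivAt t (hD.comp_hasDerivAt t (hγ t))⟩
  have hmono : StrictMonoOn (fun t => ⟪u, f (γ t)⟫) (Set.Icc 0 1) := by
    refine strictMonoOn_of_deriv_pos (convex_Icc 0 1) (fun t ht => ?_) (fun t ht => ?_)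
    · obtain ⟨d, -, hd⟩ := hderiv t ht
      exact hd.continuousAt.continuousWithinAt
    · rw [interior_Icc] at ht
      obtain ⟨d, hd0, hd⟩ := hderiv t (Set.Ioo_subset_Icc_self ht)
      exact hd.deriv ▸ hd0
  have := lt_sub_of_hasDerivAt_of_strictMonoOn hψγ hmono
  simp only [Function.comp, γ, zero_smul, add_zero, one_smul, u, add_sub_cancel] at this
  linarith

end StrictSubgradient

section WeightedVariance

variable {α : Type*} [MeasurableSpace α] {μ : Measure α} {e s : α → ℝ}

theorem integral_mul_sq_pos (he : ∀ x, 0 < e x) (hi : Integrable (fun x => e x * s x ^ 2) μ)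
    (hs : ¬ ∀ᵐ x ∂μ, s x = 0) : 0 < ∫ x, e x * s x ^ 2 ∂μ := by
  rw [integral_pos_iff_support_of_nonneg (fun x => by positivity [he x]) hi, pos_iff_ne_zero]
  have hsupp : Function.support (fun x => e x * s x ^ 2) = {x | ¬ s x = 0} := by
    ext x
    simp [(he x).ne']
  rwa [hsupp, Ne, ← ae_iff]

theorem sq_integral_mul_lt (he : ∀ x, 0 < e x) (hie : Integrable e μ)
    (his : Integrable (fun x => e x * s x) μ) (hiss : Integrable (fun x => e x * s x ^ 2) μ)
    (hs : ∀ m, ¬ ∀ᵐ x ∂μ, s x = m) :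
    (∫ x, e x * s x ∂μ) ^ 2 < (∫ x, e x ∂μ) * ∫ x, e x * s x ^ 2 ∂μ := by
  set Z := ∫ x, e x ∂μ
  set I₁ := ∫ x, e x * s x ∂μ
  set I₂ := ∫ x, e x * s x ^ 2 ∂μ
  have hμ : μ ≠ 0 := by
    rintro rfl
    exact hs 0 (by simp)
  have hZ : 0 < Z := by
    rw [integral_pos_iff_support_of_nonneg (fun x => (he x).le) hie,
      Function.support_eq_univ fun x => (he x).ne']
    exact Measure.measure_univ_pos.mpr hμ
  -- `∫ e (s - m)²` is `Z` times the variance of `s` under the law `e dμ / Z`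
  set m := I₁ / Z
  have hexp : (fun x => e x * (s x - m) ^ 2) =
      fun x => e x * s x ^ 2 - 2 * m * (e x * s x) + m ^ 2 * e x := by
    funext x; ring
  have hint₁ : Integrable (fun x => e x * s x ^ 2 - 2 * m * (e x * s x)) μ :=
    hiss.sub (his.const_mul _)
  have hint : Integrable (fun x => e x * (s x - m) ^ 2) μ := hexp ▸ hint₁.add (hie.const_mul _)
  have hvar : ∫ x, e x * (s x - m) ^ 2 ∂μ = I₂ - 2 * m * I₁ + m ^ 2 * Z := by
    rw [hexp, integral_add hint₁ (hie.const_mul _), integral_sub hiss (his.const_mul _),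
      integral_const_mul, integral_const_mul]
  have hpos : 0 < ∫ x, e x * (s x - m) ^ 2 ∂μ :=
    integral_mul_sq_pos he hint fun h => hs m (h.mono fun x hx => sub_eq_zero.mp hx)
  have hform : I₂ - 2 * m * I₁ + m ^ 2 * Z = (Z * I₂ - I₁ ^ 2) / Z := by
    simp only [m]; field_simp; ring
  rw [hvar, hform] at hpos
  nlinarith [div_pos_iff_of_pos_right hZ |>.mp hpos]

end WeightedVariance

section Separability

variable {H : Type*} [NormedAddCommGroup H] [InnerProductSpace ℝ H]

theorem HilbertBasis.separableSpace {ι : Type*} [Countable ι] (b : HilbertBasis ι ℝ H) :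
    TopologicalSpace.SeparableSpace H := by
  rw [← TopologicalSpace.isSeparable_univ_iff, ← Submodule.top_coe (R := ℝ), ← b.dense_span,
    Submodule.topologicalClosure_coe]
  exact (Set.countable_range b).isSeparable.span.closure

variable [MeasurableSpace H] [BorelSpace H] {μ : Measure H} {w : H → ℝ}

theorem Orthonormal.countable_of_integrable {ι : Type*} {v : ι → H} (hv : Orthonormal ℝ v)
    (hw : ∀ x, 0 < w x) (hwm : AEStronglyMeasurable w μ)
    (hi : Integrable (fun x => w x * ‖x‖ ^ 2) μ) (hnd : ∀ i, ¬ ∀ᵐ x ∂μ, ⟪x, v i⟫ = 0) :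
    Countable ι := by
  have hcoord : ∀ (s : Finset ι) x, ∑ i ∈ s, ⟪x, v i⟫ ^ 2 ≤ ‖x‖ ^ 2 := fun s x => by
    simpa [real_inner_comm] using hv.sum_inner_products_le (𝕜 := ℝ) x (s := s)
  have hint : ∀ i, Integrable (fun x => w x * ⟪x, v i⟫ ^ 2) μ := fun i => by
    refine hi.mono' (hwm.mul (by fun_prop : Continuous fun x => ⟪x, v i⟫ ^ 2).aestronglyMeasurable)
      (Filter.Eventually.of_forall fun x => ?_)
    have := Finset.sum_singleton (fun j => ⟪x, v j⟫ ^ 2) i ▸ hcoord {i} x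
    rw [Real.norm_of_nonneg (by positivity [hw x])]
    exact mul_le_mul_of_nonneg_left this (hw x).le
  have hpos : ∀ i, 0 < ∫ x, w x * ⟪x, v i⟫ ^ 2 ∂μ := fun i =>
    integral_mul_sq_pos hw (hint i) (hnd i)
  have hsum : Summable fun i => ∫ x, w x * ⟪x, v i⟫ ^ 2 ∂μ := by
    refine summable_of_sum_le (fun i => (hpos i).le) (c := ∫ x, w x * ‖x‖ ^ 2 ∂μ) fun s => ?_
    rw [← integral_finsetSum s fun i _ => hint i]
    refine integral_mono (integrable_finsetSum s fun i _ => hint i) hi fun x => ?_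
    simp only [← Finset.mul_sum]
    exact mul_le_mul_of_nonneg_left (hcoord s x) (hw x).le
  rw [← Set.countable_univ_iff, ← Function.support_eq_univ fun i => (hpos i).ne']
  exact hsum.countable_support

theorem separableSpace_of_integrable [CompleteSpace H] (hw : ∀ x, 0 < w x)
    (hwm : AEStronglyMeasurable w μ) (hi : Integrable (fun x => w x * ‖x‖ ^ 2) μ)
    (hnd : ∀ u, u ≠ 0 → ¬ ∀ᵐ x ∂μ, ⟪x, u⟫ = 0) : TopologicalSpace.SeparableSpace H := by
  obtain ⟨s, b, hb⟩ := exists_hilbertBasis ℝ H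
  have hv : Orthonormal ℝ ((↑) : s → H) := hb ▸ b.orthonormal
  have : Countable s := hv.countable_of_integrable hw hwm hi fun i => hnd i (hv.ne_zero i)
  exact b.separableSpace

end Separability

theorem protoMean_mul_left {H : Type*} [NormedAddCommGroup H] [InnerProductSpace ℝ H]
    [CompleteSpace H] [MeasurableSpace H] {q : H → H → ℝ} {k : H → ℝ} (hk : ∀ y, k y ≠ 0)
    (P : Measure H) : protoMean (fun y x => k y * q y x) P = protoMean q P := by
  funext y
  simp only [protoMean, mul_smul]
  rw [integral_const_mul, integral_smul, mul_inv, smul_smul, mul_right_comm,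
    inv_mul_cancel₀ (hk y), one_mul]

section ExpTilt

variable {H : Type*} [NormedAddCommGroup H] [InnerProductSpace ℝ H]

noncomputable def expTilt (a : H → ℝ) (c : ℝ) (y x : H) : ℝ := Real.exp (-a x + c * ⟪x, y⟫)

noncomputable def tiltEnvelope (a : H → ℝ) (c r : ℝ) (y x : H) : ℝ :=
  (1 + ‖x‖) ^ 2 * Real.exp (-a x + c * r * ‖x‖ + c * ⟪x, y⟫)

variable {a : H → ℝ} {c r : ℝ} {y : H}

theorem expTilt_pos (a : H → ℝ) (c : ℝ) (y x : H) : 0 < expTilt a c y x := Real.exp_pos _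

theorem expTilt_le_of_mem_closedBall (hc : 0 ≤ c) {y' : H} (hy' : y' ∈ Metric.closedBall y r)
    (x : H) : expTilt a c y' x ≤ Real.exp (-a x + c * r * ‖x‖ + c * ⟪x, y⟫) := by
  have h : ⟪x, y'⟫ - ⟪x, y⟫ ≤ ‖x‖ * r := by
    rw [← inner_sub_right]
    exact (real_inner_le_norm x _).trans
      (mul_le_mul_of_nonneg_left (mem_closedBall_iff_norm.mp hy') (norm_nonneg x))
  refine Real.exp_le_exp.mpr ?_
  nlinarith [mul_le_mul_of_nonneg_left h hc]

theorem norm_expTilt_smul_le {E : Type*} [NormedAddCommGroup E] [NormedSpace ℝ E] {F : H → E}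
    {K : ℝ} (hF : ∀ x, ‖F x‖ ≤ K * (1 + ‖x‖) ^ 2) (hc : 0 ≤ c) {y' : H}
    (hy' : y' ∈ Metric.closedBall y r) (x : H) :
    ‖expTilt a c y' x • F x‖ ≤ K * tiltEnvelope a c r y x := by
  rw [norm_smul, Real.norm_of_nonneg (expTilt_pos a c y' x).le, tiltEnvelope, ← mul_assoc,
    mul_comm (K * _)]
  exact mul_le_mul (expTilt_le_of_mem_closedBall hc hy' x) (hF x) (norm_nonneg _)
    (Real.exp_pos _).le

theorem norm_smul_innerSL_smulRight_le {E : Type*} [NormedAddCommGroup E] [NormedSpace ℝ E]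
    (hc : 0 ≤ c) {x : H} {v : E} (hv : ‖v‖ ≤ 1 + ‖x‖) :
    ‖(c • innerSL ℝ x).smulRight v‖ ≤ c * (1 + ‖x‖) ^ 2 := by
  rw [ContinuousLinearMap.norm_smulRight_apply, norm_smul, innerSL_apply_norm,
    Real.norm_of_nonneg hc, mul_assoc, sq]
  gcongr
  linarith [norm_nonneg x]

theorem hasFDerivAt_expTilt_smul {E : Type*} [NormedAddCommGroup E] [NormedSpace ℝ E] (v : E)
    (x y' : H) : HasFDerivAt (fun y => expTilt a c y x • v)
      (expTilt a c y' x • (c • innerSL ℝ x).smulRight v) y' := by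
  have h : HasFDerivAt (fun y => expTilt a c y x) (expTilt a c y' x • c • innerSL ℝ x) y' :=
    (((innerSL ℝ x).hasFDerivAt.const_mul c).const_add (-a x)).exp
  convert h.smul_const v using 1
  ext w
  simp [smul_smul, mul_assoc]

variable [MeasurableSpace H] [BorelSpace H] {P : Measure H}

theorem aestronglyMeasurable_expTilt (hG : Integrable (tiltEnvelope a c r y) P) (y' : H) :
    AEStronglyMeasurable (expTilt a c y') P := by
  -- `a` is not assumed measurable; measurability comes from the integrable envelope
  have hcont : Continuous fun x : H =>
      Real.exp (c * ⟪x, y'⟫ - c * r * ‖x‖ - c * ⟪x, y⟫) / (1 + ‖x‖) ^ 2 :=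
    by fun_prop (disch := intro x; positivity)
  convert hG.1.mul hcont.aestronglyMeasurable using 1
  funext x
  simp only [expTilt, tiltEnvelope, Pi.mul_apply]
  field_simp
  rw [← Real.exp_add]
  ring_nf

theorem integrable_expTilt_smul {E : Type*} [NormedAddCommGroup E] [NormedSpace ℝ E] {F : H → E}
    {K : ℝ} (hFm : AEStronglyMeasurable F P) (hF : ∀ x, ‖F x‖ ≤ K * (1 + ‖x‖) ^ 2) (hc : 0 ≤ c)
    (hG : Integrable (tiltEnvelope a c r y) P) {y' : H} (hy' : y' ∈ Metric.closedBall y r) :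
    Integrable (fun x => expTilt a c y' x • F x) P :=
  (hG.const_mul K).mono' ((aestronglyMeasurable_expTilt hG y').smul hFm)
    (Filter.Eventually.of_forall (norm_expTilt_smul_le hF hc hy'))

theorem integrable_expTilt (hc : 0 ≤ c) (hG : Integrable (tiltEnvelope a c r y) P) {y' : H}
    (hy' : y' ∈ Metric.closedBall y r) : Integrable (expTilt a c y') P := by
  simpa using integrable_expTilt_smul (F := fun _ => (1 : ℝ)) (K := 1) aestronglyMeasurable_const
    (fun x => by rw [norm_one]; nlinarith [norm_nonneg x]) hc hG hy'

theorem integrable_expTilt_mul_inner_pow (hc : 0 ≤ c) (hG : Integrable (tiltEnvelope a c r y) P)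
    {y' : H} (hy' : y' ∈ Metric.closedBall y r) (u : H) {n : ℕ} (hn : n ≤ 2) :
    Integrable (fun x => expTilt a c y' x * ⟪x, u⟫ ^ n) P := by
  refine integrable_expTilt_smul (K := ‖u‖ ^ n)
    (by fun_prop : Continuous fun x => ⟪x, u⟫ ^ n).aestronglyMeasurable (fun x => ?_) hc hG hy'
  have h1 : 1 ≤ 1 + ‖x‖ := le_add_of_nonneg_right (norm_nonneg x)
  have hinner : |⟪x, u⟫| ≤ ‖u‖ * (1 + ‖x‖) := by
    nlinarith [abs_real_inner_le_norm x u, norm_nonneg x, norm_nonneg u]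
  calc ‖⟪x, u⟫ ^ n‖ = |⟪x, u⟫| ^ n := by rw [norm_pow, Real.norm_eq_abs]
    _ ≤ ‖u‖ ^ n * (1 + ‖x‖) ^ n := by rw [← mul_pow]; gcongr
    _ ≤ ‖u‖ ^ n * (1 + ‖x‖) ^ 2 := by gcongr

noncomputable def partitionFn (P : Measure H) (a : H → ℝ) (c : ℝ) (y : H) : ℝ :=
  ∫ x, expTilt a c y x ∂P

theorem partitionFn_pos [NeZero P] (hc : 0 ≤ c) (hr : 0 ≤ r)
    (hG : Integrable (tiltEnvelope a c r y) P) : 0 < partitionFn P a c y :=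
  integral_exp_pos (f := fun x => -a x + c * ⟪x, y⟫)
    (integrable_expTilt hc hG (Metric.mem_closedBall_self hr))

theorem separableSpace_of_integrable_tiltEnvelope [CompleteSpace H] (hc : 0 ≤ c) (hr : 0 ≤ r)
    (hG : Integrable (tiltEnvelope a c r y) P) (hnd : ∀ u, u ≠ 0 → ¬ ∀ᵐ x ∂P, ⟪x, u⟫ = 0) :
    TopologicalSpace.SeparableSpace H :=
  separableSpace_of_integrable (expTilt_pos a c y) (aestronglyMeasurable_expTilt hG y)
    (integrable_expTilt_smul (F := fun x => ‖x‖ ^ 2) (K := 1)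
      (continuous_norm.pow 2).aestronglyMeasurable
      (fun x => by rw [norm_pow, norm_norm, one_mul]; gcongr; linarith [norm_nonneg x]) hc hG
      (Metric.mem_closedBall_self hr)) hnd

variable [SecondCountableTopology H]

theorem aestronglyMeasurable_smul_innerSL_smulRight {E : Type*} [NormedAddCommGroup E]
    [NormedSpace ℝ E] {F : H → E} (hFm : AEStronglyMeasurable F P) :
    AEStronglyMeasurable (fun x => (c • innerSL ℝ x).smulRight (F x)) P :=
  (ContinuousLinearMap.smulRightL ℝ H E).aestronglyMeasurable_comp₂
    (by fun_prop : Continuous fun x : H => c • innerSL ℝ x).aestronglyMeasurable hFm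

theorem integrable_expTilt_smul_smulRight {E : Type*} [NormedAddCommGroup E] [NormedSpace ℝ E]
    {F : H → E} (hFm : AEStronglyMeasurable F P) (hF : ∀ x, ‖F x‖ ≤ 1 + ‖x‖) (hc : 0 ≤ c)
    (hG : Integrable (tiltEnvelope a c r y) P) {y' : H} (hy' : y' ∈ Metric.closedBall y r) :
    Integrable (fun x => expTilt a c y' x • (c • innerSL ℝ x).smulRight (F x)) P :=
  integrable_expTilt_smul (aestronglyMeasurable_smul_innerSL_smulRight hFm)
    (fun x => norm_smul_innerSL_smulRight_le hc (hF x)) hc hG hy'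

theorem hasFDerivAt_integral_expTilt_smul {E : Type*} [NormedAddCommGroup E] [NormedSpace ℝ E]
    [CompleteSpace E] {F : H → E} (hFm : AEStronglyMeasurable F P) (hF : ∀ x, ‖F x‖ ≤ 1 + ‖x‖)
    (hc : 0 ≤ c) (hr : 0 < r) (hG : Integrable (tiltEnvelope a c r y) P) :
    HasFDerivAt (fun y => ∫ x, expTilt a c y x • F x ∂P)
      (∫ x, expTilt a c y x • (c • innerSL ℝ x).smulRight (F x) ∂P) y := by
  have hy := Metric.mem_closedBall_self (x := y) hr.le
  refine hasFDerivAt_integral_of_dominated_of_fderiv_le (Metric.ball_mem_nhds y hr)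
    (Filter.Eventually.of_forall fun y' => (aestronglyMeasurable_expTilt hG y').smul hFm)
    (integrable_expTilt_smul (K := 1) hFm (fun x => ?_) hc hG hy)
    (integrable_expTilt_smul_smulRight hFm hF hc hG hy).aestronglyMeasurable
    (Filter.Eventually.of_forall fun x y' hy' => norm_expTilt_smul_le
      (fun x => norm_smul_innerSL_smulRight_le hc (hF x)) hc (Metric.ball_subset_closedBall hy') x)
    (hG.const_mul c)
    (Filter.Eventually.of_forall fun x y' _ => hasFDerivAt_expTilt_smul (F x) x y')
  nlinarith [hF x, norm_nonneg x]

variable [CompleteSpace H]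

omit [BorelSpace H] [SecondCountableTopology H] in
theorem protoMean_eq_protoMean_expTilt {b : H → ℝ} {q : H → H → ℝ}
    (hq : ∀ y x, q y x = Real.exp (-a x - b y + c * ⟪x, y⟫)) :
    protoMean q P = protoMean (expTilt a c) P := by
  rw [← protoMean_mul_left (q := expTilt a c) (fun y => (Real.exp_pos (-b y)).ne')]
  congr 1
  funext y x
  rw [hq, expTilt, ← Real.exp_add]
  ring_nf

noncomputable def tiltedMoment (P : Measure H) (a : H → ℝ) (c : ℝ) (y : H) : H :=
  ∫ x, expTilt a c y x • x ∂P

theorem inner_tiltedMoment (hc : 0 ≤ c) (hr : 0 ≤ r) (hG : Integrable (tiltEnvelope a c r y) P)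
    (u : H) : ⟪u, tiltedMoment P a c y⟫ = ∫ x, expTilt a c y x * ⟪x, u⟫ ∂P := by
  have hint := integrable_expTilt_smul (F := fun x => x) (K := 1) aestronglyMeasurable_id
    (fun x => by nlinarith [norm_nonneg x]) hc hG (Metric.mem_closedBall_self hr)
  rw [tiltedMoment, ← integral_inner hint u]
  simp [real_inner_smul_right, real_inner_comm]

theorem hasFDerivAt_tiltedMoment (hc : 0 ≤ c) (hr : 0 < r)
    (hG : Integrable (tiltEnvelope a c r y) P) :
    HasFDerivAt (tiltedMoment P a c)
      (∫ x, expTilt a c y x • (c • innerSL ℝ x).smulRight x ∂P) y :=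
  hasFDerivAt_integral_expTilt_smul (F := fun x => x) aestronglyMeasurable_id
    (fun x => by linarith [norm_nonneg x]) hc hr hG

theorem inner_integral_expTilt_smulRight_apply (hc : 0 ≤ c) (hr : 0 ≤ r)
    (hG : Integrable (tiltEnvelope a c r y) P) (u : H) :
    ⟪u, (∫ x, expTilt a c y x • (c • innerSL ℝ x).smulRight x ∂P) u⟫ =
      c * ∫ x, expTilt a c y x * ⟪x, u⟫ ^ 2 ∂P := by
  have hint := integrable_expTilt_smul_smulRight (F := fun x => x) aestronglyMeasurable_id
    (fun x => by linarith [norm_nonneg x]) hc hG (Metric.mem_closedBall_self hr)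
  rw [ContinuousLinearMap.integral_apply hint u,
    ← integral_inner (hint.apply_continuousLinearMap u) u, ← integral_const_mul]
  congr 1
  funext x
  simp [real_inner_smul_right, real_inner_comm]
  ring

theorem hasFDerivAt_partitionFn (hc : 0 ≤ c) (hr : 0 < r)
    (hG : Integrable (tiltEnvelope a c r y) P) :
    HasFDerivAt (partitionFn P a c) (c • innerSL ℝ (tiltedMoment P a c y)) y := by
  have h := hasFDerivAt_integral_expTilt_smul (F := fun _ => (1 : ℝ)) aestronglyMeasurable_const
    (fun x => by rw [norm_one]; linarith [norm_nonneg x]) hc hr hG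
  have hint := integrable_expTilt_smul_smulRight (F := fun _ => (1 : ℝ)) aestronglyMeasurable_const
    (fun x => by rw [norm_one]; linarith [norm_nonneg x]) hc hG (Metric.mem_closedBall_self hr.le)
  simp only [smul_eq_mul, mul_one] at h
  refine h.congr_fderiv (ContinuousLinearMap.ext fun v => ?_)
  rw [ContinuousLinearMap.integral_apply hint v, smul_apply, innerSL_apply_apply,
    real_inner_comm, inner_tiltedMoment hc hr.le hG v, smul_eq_mul, ← integral_const_mul]
  congr 1
  funext x
  simp
  ring

theorem hasFDerivAt_inv_mul_log_partitionFn [NeZero P] (hc : 0 < c) (hr : 0 < r)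
    (hG : Integrable (tiltEnvelope a c r y) P) :
    HasFDerivAt (fun y => c⁻¹ * Real.log (partitionFn P a c y))
      (innerSL ℝ (protoMean (expTilt a c) P y)) y := by
  have h := ((hasFDerivAt_partitionFn hc.le hr hG).log
    (partitionFn_pos hc.le hr.le hG).ne').const_mul c⁻¹
  refine h.congr_fderiv (ContinuousLinearMap.ext fun v => ?_)
  simp only [partitionFn, tiltedMoment, smul_apply, coe_innerSL_apply, smul_eq_mul, protoMean,
    map_smul]
  rw [mul_left_comm, inv_mul_cancel_left₀ hc.ne']

theorem exists_hasFDerivAt_protoMean_expTilt_inner_pos [NeZero P] (hc : 0 < c) (hr : 0 < r)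
    (hG : Integrable (tiltEnvelope a c r y) P)
    (hnd : ∀ u, u ≠ 0 → ∀ d, ¬ ∀ᵐ x ∂P, ⟪x, u⟫ = d) :
    ∃ D : H →L[ℝ] H, HasFDerivAt (protoMean (expTilt a c) P) D y ∧
      ∀ u, u ≠ 0 → 0 < ⟪u, D u⟫ := by
  have hZ := partitionFn_pos hc.le hr.le hG
  refine ⟨_, ((hasDerivAt_inv hZ.ne').comp_hasFDerivAt y
    (hasFDerivAt_partitionFn hc.le hr hG)).smul (hasFDerivAt_tiltedMoment hc.le hr hG),
    fun u hu => ?_⟩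
  have hy := Metric.mem_closedBall_self (x := y) hr.le
  have hCS := sq_integral_mul_lt (expTilt_pos a c y) (integrable_expTilt hc.le hG hy)
    (by simpa using integrable_expTilt_mul_inner_pow hc.le hG hy u (n := 1) (by norm_num))
    (integrable_expTilt_mul_inner_pow hc.le hG hy u le_rfl) (hnd u hu)
  have hN : ⟪u, ∫ x, expTilt a c y x • x ∂P⟫ = _ := inner_tiltedMoment hc.le hr.le hG u
  set Z := partitionFn P a c y
  set I₁ := ∫ x, expTilt a c y x * ⟪x, u⟫ ∂P
  set I₂ := ∫ x, expTilt a c y x * ⟪x, u⟫ ^ 2 ∂P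
  have hvar : 0 < Z * I₂ - I₁ ^ 2 := sub_pos.mpr hCS
  rw [add_apply, ContinuousLinearMap.smulRight_apply, inner_add_right, real_inner_smul_right, hN]
  simp only [Function.comp_apply, smul_apply, inner_smul_right,
    inner_integral_expTilt_smulRight_apply hc.le hr.le hG u, innerSL_apply_apply, smul_eq_mul]
  rw [real_inner_comm, inner_tiltedMoment hc.le hr.le hG]
  have hform : Z⁻¹ * (c * I₂) + -(Z ^ 2)⁻¹ * (c * I₁) * I₁ = c * (Z * I₂ - I₁ ^ 2) / Z ^ 2 := by
    field_simp
    ring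
  rw [hform]
  exact div_pos (mul_pos hc hvar) (pow_pos hZ 2)

end ExpTilt

theorem stmt14_general {H : Type*} [NormedAddCommGroup H] [InnerProductSpace ℝ H]
    [CompleteSpace H] [MeasurableSpace H] [BorelSpace H]
    (Y : Set H) (hYc : Convex ℝ Y)
    (c : ℝ) (hc : 0 < c) (a : H → ℝ) (b : H → ℝ)
    (q : H → H → ℝ) (hq : ∀ y x : H, q y x = Real.exp (-a x - b y + c * ⟪x, y⟫))
    (P : Measure H) [IsProbabilityMeasure P]
    (hPint : ∀ y ∈ Y, ∃ r > (0 : ℝ), Integrable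
      (fun x => (1 + ‖x‖) ^ 2 * Real.exp (-a x + c * r * ‖x‖ + c * ⟪x, y⟫)) P)
    (hnd : ∀ u : H, u ≠ 0 → ∀ d : ℝ, P {x | ⟪x, u⟫ = d} < 1) :
    (∃ D : H → H →L[ℝ] H, ∀ y ∈ Y,
      HasFDerivAt (protoMean q P) (D y) y ∧
      (∀ u : H, u ≠ 0 → 0 < ⟪u, D y u⟫)) ∧
    Set.InjOn (protoMean q P) Y ∧
    (∃ φ : H → EReal, ∀ y ∈ Y, ∀ x : H, x ≠ protoMean q P y →
      ((2⁻¹ * ‖y - protoMean q P y‖ ^ 2 : ℝ) : EReal) + φ (protoMean q P y) <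
        ((2⁻¹ * ‖y - x‖ ^ 2 : ℝ) : EReal) + φ x) := by
  rcases Y.eq_empty_or_nonempty with rfl | ⟨y₀, hy₀⟩
  · exact ⟨⟨0, by simp⟩, Set.injOn_empty _, ⟨0, by simp⟩⟩
  have hnd' : ∀ u, u ≠ 0 → ∀ d, ¬ ∀ᵐ x ∂P, ⟪x, u⟫ = d := fun u hu d h => by
    have hmeas : MeasurableSet {x : H | ⟪x, u⟫ = d} :=
      measurableSet_eq_fun (by fun_prop) measurable_const
    exact (hnd u hu d).ne ((ae_iff_measure_eq hmeas.nullMeasurableSet).mp h ▸ measure_univ)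
  obtain ⟨r₀, hr₀, hG₀⟩ := hPint y₀ hy₀
  have := separableSpace_of_integrable_tiltEnvelope hc.le hr₀.le hG₀ fun u hu => hnd' u hu 0
  have hD : ∀ y ∈ Y, ∃ D : H →L[ℝ] H, HasFDerivAt (protoMean (expTilt a c) P) D y ∧
      ∀ u, u ≠ 0 → 0 < ⟪u, D u⟫ := fun y hy =>
    let ⟨_, hr, hG⟩ := hPint y hy
    exists_hasFDerivAt_protoMean_expTilt_inner_pos hc hr hG hnd'
  have hsub := isStrictSubgradientOn_of_hasFDerivAt hYc
    (fun y hy => let ⟨_, hr, hG⟩ := hPint y hy; hasFDerivAt_inv_mul_log_partitionFn hc hr hG) hD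
  rw [protoMean_eq_protoMean_expTilt hq]
  refine ⟨⟨fderiv ℝ (protoMean (expTilt a c) P), fun y hy => ?_⟩, hsub.injOn, hsub.exists_penalty⟩
  obtain ⟨D, hDf, hDpos⟩ := hD y hy
  exact hDf.fderiv ▸ ⟨hDf, hDpos⟩

/-- For an exponential-family proto conditional density `q(y|x) = exp(−a(x) − b(y) + c⟨x,y⟩)`
with `c > 0`, `b` C¹ with locally bounded derivative, and a prior `P` satisfying the moment
condition whose support lies in no affine hyperplane, the proto conditional mean has positive
definite differential, is injective on `𝒴`, and there is a penalty `φ` such that `f_P(y)` is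
the unique minimizer of `x ↦ (1/2)‖y − x‖² + φ(x)` for every `y ∈ 𝒴`. -/
theorem stmt14 {H : Type*} [NormedAddCommGroup H] [InnerProductSpace ℝ H]
    [CompleteSpace H] [MeasurableSpace H] [BorelSpace H]
    (X Y : Set H) (hYo : IsOpen Y) (hYc : Convex ℝ Y)
    (c : ℝ) (hc : 0 < c) (a : H → ℝ) (b : H → ℝ) (b' : H → H)
    (hb : ∀ y ∈ Y, HasGradientAt b (b' y) y) (hb'c : ContinuousOn b' Y)
    (hb'loc : ∀ y ∈ Y, ∃ ε > 0, ∃ M : ℝ, ∀ y' ∈ Y, ‖y' - y‖ < ε → ‖b' y'‖ ≤ M)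
    (q : H → H → ℝ) (hq : ∀ y x : H, q y x = Real.exp (-a x - b y + c * ⟪x, y⟫))
    (P : Measure H) [IsProbabilityMeasure P] (hPX : ∀ᵐ x ∂P, x ∈ X)
    (hPint : ∀ y ∈ Y, ∃ r > (0 : ℝ), Integrable
      (fun x => (1 + ‖x‖) ^ 2 * Real.exp (-a x + c * r * ‖x‖ + c * ⟪x, y⟫)) P)
    (hnd : ∀ u : H, u ≠ 0 → ∀ d : ℝ, P {x | ⟪x, u⟫ = d} < 1) :
    (∃ D : H → H →L[ℝ] H, ∀ y ∈ Y,
      HasFDerivAt (protoMean q P) (D y) y ∧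
      (∀ u : H, u ≠ 0 → 0 < ⟪u, D y u⟫)) ∧
    Set.InjOn (protoMean q P) Y ∧
    (∃ φ : H → EReal, ∀ y ∈ Y, ∀ x : H, x ≠ protoMean q P y →
      ((2⁻¹ * ‖y - protoMean q P y‖ ^ 2 : ℝ) : EReal) + φ (protoMean q P y) <
        ((2⁻¹ * ‖y - x‖ ^ 2 : ℝ) : EReal) + φ x) :=
  stmt14_general Y hYc c hc a b q hq P hPint hnd
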